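/- Let q ≥ 3 be an odd integer, write c = cos(π/q), s = sin(π/q), t = tan(π/q), and let M, m > 0 satisfy m/M = t². Given incident velocities V_in > v_in > 0, define the outgoing velocities by V_out = −c·V_in − t·s·v_in and v_out = −c·(V_in − v_in). Then: (i) kinetic energy is conserved, M·V_out² + m·v_out² = M·V_in² + m·v_in²; (ii) the superintegrable invariant is conserved, Re((V_out + i·t·v_out)^q) = Re((V_in + i·t·v_in)^q); and (iii) the outgoing state satisfies the ordering V_out < v_out < 0. -/

import Mathlib

/-!
Put `z = V + i·tan(π/q)·v`. Then `M·V² + m·v² = M·|z|²`, and the collision map is the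
reflection `z ↦ -e^{iπ/q}·z̄`. Reflections preserve `|z|`, and since `(-e^{iπ/q})^q = 1` for
odd `q`, the outgoing `z^q` is the conjugate of the incident one, so `Re(z^q)` is preserved.
For the ordering, `V_out - v_out = -v_in / cos(π/q)` and `cos(π/q) > 0` since `q ≥ 3`.
-/

open Complex ComplexConjugate

namespace Galperin

theorem cos_pi_div_pos {q : ℕ} (hq : 3 ≤ q) : 0 < Real.cos (Real.pi / q) := by
  have hq2 : (2 : ℝ) < q := by exact_mod_cast hq
  apply Real.cos_pos_of_mem_Ioo
  constructor
  · linarith [Real.pi_pos, div_pos Real.pi_pos (by linarith : (0 : ℝ) < q)]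
  · exact div_lt_div_of_pos_left Real.pi_pos two_pos hq2

theorem neg_exp_pi_div_mul_I_pow_of_odd {q : ℕ} (hodd : Odd q) :
    (-exp ((Real.pi / q : ℝ) * I)) ^ q = 1 := by
  have hq : (q : ℂ) ≠ 0 := by exact_mod_cast hodd.pos.ne'
  have hangle : (q : ℂ) * ((Real.pi / q : ℝ) * I) = Real.pi * I := by
    push_cast
    field_simp
  rw [neg_pow, ← exp_nat_mul, hangle, exp_pi_mul_I, hodd.neg_one_pow]
  ring

theorem re_pow_mul_conj_of_pow_eq_one {w : ℂ} {n : ℕ} (hw : w ^ n = 1) (z : ℂ) :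
    ((w * conj z) ^ n).re = (z ^ n).re := by
  rw [mul_pow, hw, one_mul, ← map_pow, conj_re]

theorem norm_neg_exp_mul_I_mul_conj (θ : ℝ) (z : ℂ) : ‖-exp (θ * I) * conj z‖ = ‖z‖ := by
  rw [norm_mul, norm_neg, norm_exp_ofReal_mul_I, one_mul, Complex.norm_conj]

theorem kinetic_energy_eq_mul_norm_sq {M m t V v : ℝ} (hm : m = M * t ^ 2) :
    M * V ^ 2 + m * v ^ 2 = M * ‖(V : ℂ) + I * t * v‖ ^ 2 := by
  have hz : (V : ℂ) + I * t * v = V + ((t * v : ℝ) : ℂ) * I := by push_cast; ring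
  rw [hz, Complex.sq_norm, normSq_add_mul_I, hm]
  ring

theorem outgoing_eq_neg_exp_mul_I_mul_conj {θ : ℝ} (hθ : Real.cos θ ≠ 0) (V v : ℝ) :
    ((-Real.cos θ * V - Real.tan θ * Real.sin θ * v : ℝ) : ℂ)
        + I * Real.tan θ * ((-Real.cos θ * (V - v) : ℝ) : ℂ)
      = -exp (θ * I) * conj ((V : ℂ) + I * Real.tan θ * v) := by
  have htan : (Real.tan θ : ℂ) * Real.cos θ = Real.sin θ := by
    rw [Real.tan_eq_sin_div_cos]
    exact_mod_cast div_mul_cancel₀ _ hθ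
  rw [exp_mul_I, ← ofReal_cos, ← ofReal_sin]
  simp only [map_add, map_mul, conj_ofReal, conj_I]
  generalize Real.cos θ = c, Real.sin θ = s, Real.tan θ = t at htan ⊢
  push_cast
  linear_combination (-I * V) * htan - s * t * v * I_sq

theorem outgoing_ordering {θ V v : ℝ} (hθ : 0 < Real.cos θ) (hv : 0 < v) (hvV : v < V) :
    -Real.cos θ * V - Real.tan θ * Real.sin θ * v < -Real.cos θ * (V - v) ∧
      -Real.cos θ * (V - v) < 0 := by
  have hdiff : -Real.cos θ * V - Real.tan θ * Real.sin θ * v - -Real.cos θ * (V - v)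
      = -(v / Real.cos θ) := by
    rw [Real.tan_eq_sin_div_cos]
    field_simp
    linear_combination -v * Real.sin_sq_add_cos_sq θ
  constructor
  · linarith [div_pos hv hθ]
  · linarith [mul_pos hθ (sub_pos.2 hvV)]

end Galperin

open Galperin in
theorem galperin_odd_superintegrable_outgoing_general
    (q : ℕ) (hq : 3 ≤ q) (hodd : Odd q)
    (c s t M m Vin vin Vout vout : ℝ)
    (hc : c = Real.cos (Real.pi / q)) (hs : s = Real.sin (Real.pi / q))
    (ht : t = Real.tan (Real.pi / q))
    (hM : 0 < M) (hratio : m / M = t ^ 2)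
    (hvin : 0 < vin) (hVin : vin < Vin)
    (hVout : Vout = -c * Vin - t * s * vin)
    (hvout : vout = -c * (Vin - vin)) :
    M * Vout ^ 2 + m * vout ^ 2 = M * Vin ^ 2 + m * vin ^ 2 ∧
    (((Vout : ℂ) + Complex.I * (t : ℝ) * (vout : ℂ)) ^ q).re
      = (((Vin : ℂ) + Complex.I * (t : ℝ) * (vin : ℂ)) ^ q).re ∧
    Vout < vout ∧ vout < 0 := by
  have hmass : m = M * t ^ 2 := by rw [← hratio]; field_simp
  have hcos := cos_pi_div_pos hq
  have hreflect := outgoing_eq_neg_exp_mul_I_mul_conj hcos.ne' Vin vin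
  rw [← hc, ← hs, ← ht, ← hVout, ← hvout] at hreflect
  refine ⟨?_, ?_, ?_⟩
  · rw [kinetic_energy_eq_mul_norm_sq hmass, kinetic_energy_eq_mul_norm_sq hmass, hreflect,
      norm_neg_exp_mul_I_mul_conj]
  · rw [hreflect, re_pow_mul_conj_of_pow_eq_one (neg_exp_pi_div_mul_I_pow_of_odd hodd)]
  · subst hc hs ht hVout hvout
    exact outgoing_ordering hcos hvin hVin

/-- Odd superintegrable case `q` odd, `m/M = tan²(π/q)`: for incident
velocities `V_in > v_in > 0`, the outgoing velocities
`V_out = −cos(π/q)·V_in − tan(π/q)·sin(π/q)·v_in`,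
`v_out = −cos(π/q)·(V_in − v_in)` conserve the kinetic energy and the
superintegrable invariant `Re((V + i·tan(π/q)·v)^q)`, and satisfy the
outgoing ordering `V_out < v_out < 0`. -/
theorem galperin_odd_superintegrable_outgoing
    (q : ℕ) (hq : 3 ≤ q) (hodd : Odd q)
    (c s t M m Vin vin Vout vout : ℝ)
    (hc : c = Real.cos (Real.pi / q)) (hs : s = Real.sin (Real.pi / q))
    (ht : t = Real.tan (Real.pi / q))
    (hM : 0 < M) (hm : 0 < m) (hratio : m / M = t ^ 2)
    (hvin : 0 < vin) (hVin : vin < Vin)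
    (hVout : Vout = -c * Vin - t * s * vin)
    (hvout : vout = -c * (Vin - vin)) :
    M * Vout ^ 2 + m * vout ^ 2 = M * Vin ^ 2 + m * vin ^ 2 ∧
    (((Vout : ℂ) + Complex.I * (t : ℝ) * (vout : ℂ)) ^ q).re
      = (((Vin : ℂ) + Complex.I * (t : ℝ) * (vin : ℂ)) ^ q).re ∧
    Vout < vout ∧ vout < 0 :=
  galperin_odd_superintegrable_outgoing_general q hq hodd c s t M m Vin vin Vout vout hc hs ht hM
    hratio hvin hVin hVout hvout
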